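/- The characterisation of System P via (⋆) and (△) fails for TPL: the preferential model W_⊛ over N = {p} with exactly three states labelled by the teams X_p = {v_p}, X_p̄ = {v_p̄}, and X_pp̄ = {v_p, v_p̄} (where v_p(p)=1, v_p̄(p)=0), ordered by X_pp̄ ≺ X_p and X_pp̄ ≺ X_p̄, violates property (△) and violates property (⋆) (witnessed by min(⟦p ∨ ¬p⟧, ≺) = {X_pp̄} ⊈ min(⟦p⟧, ≺) ∪ min(⟦¬p⟧, ≺) = {X_p} ∪ {X_p̄}), yet the entailment ⊢_{W_⊛} restricted to PL-formulas over {p} satisfies System P, in particular the rule (Or). -/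
import Mathlib


/-- PL-formulas in negation normal form over variables `V`;
here `V = Unit` models the single variable `p`. -/
inductive PL (V : Type) : Type
  | pos : V → PL V
  | neg : V → PL V
  | bot : PL V
  | top : PL V
  | conj : PL V → PL V → PL V
  | disj : PL V → PL V → PL V

/-- Team semantics of PL-formulas. -/
def PL.tsat {V : Type} : PL V → Set (V → Bool) → Prop
  | .pos p, X => ∀ v ∈ X, v p = true
  | .neg p, X => ∀ v ∈ X, v p = false
  | .bot, X => X = ∅
  | .top, _ => True
  | .conj φ ψ, X => PL.tsat φ X ∧ PL.tsat ψ X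
  | .disj φ ψ, X => ∃ Y Z : Set (V → Bool), X = Y ∪ Z ∧ PL.tsat φ Y ∧ PL.tsat ψ Z

/-- The valuation `v_p` with `v_p(p) = 1`. -/
def vp : Unit → Bool := fun _ => true

/-- The valuation `v_p̄` with `v_p̄(p) = 0`. -/
def vn : Unit → Bool := fun _ => false

/-- The three states of the model `W_⊛`. -/
inductive St : Type
  | sp : St   -- labelled by `X_p = {v_p}`
  | sn : St   -- labelled by `X_p̄ = {v_p̄}`
  | sb : St   -- labelled by `X_pp̄ = {v_p, v_p̄}`
deriving DecidableEq

/-- The labelling of `W_⊛`. -/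
def lab : St → Set (Unit → Bool)
  | .sp => {vp}
  | .sn => {vn}
  | .sb => {vp, vn}

/-- The strict order of `W_⊛`: `X_pp̄ ≺ X_p` and `X_pp̄ ≺ X_p̄`. -/
def stlt : St → St → Prop := fun s t => s = .sb ∧ (t = .sp ∨ t = .sn)

/-- `s` is a `≺`-minimal state of `W_⊛` among those satisfying `φ`. -/
def minSt (φ : PL Unit) (s : St) : Prop :=
  PL.tsat φ (lab s) ∧ ∀ s', PL.tsat φ (lab s') → ¬ stlt s' s

/-- Preferential entailment `φ ⊢_{W_⊛} ψ`. -/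
def entSt (φ ψ : PL Unit) : Prop :=
  ∀ s, minSt φ s → PL.tsat ψ (lab s)

/-- `min(⟦φ⟧, ≺)` in `W_⊛`. -/
def minTeams (φ : PL Unit) : Set (Set (Unit → Bool)) :=
  {X | ∃ s, minSt φ s ∧ lab s = X}

lemma tsat_empty {V : Type} (φ : PL V) : PL.tsat φ (∅ : Set (V → Bool)) := by
  induction φ with
  | pos p => intro v hv; exact absurd hv (Set.notMem_empty v)
  | neg p => intro v hv; exact absurd hv (Set.notMem_empty v)
  | bot => rfl
  | top => trivial
  | conj φ ψ ihφ ihψ => exact ⟨ihφ, ihψ⟩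
  | disj φ ψ ihφ ihψ => exact ⟨∅, ∅, by simp, ihφ, ihψ⟩

lemma tsat_mono {V : Type} (φ : PL V) : ∀ X Y : Set (V → Bool),
    PL.tsat φ X → Y ⊆ X → PL.tsat φ Y := by
  induction φ with
  | pos p => intro X Y h hsub v hv; exact h v (hsub hv)
  | neg p => intro X Y h hsub v hv; exact h v (hsub hv)
  | bot => intro X Y h hsub; subst h; exact Set.subset_empty_iff.mp hsub
  | top => intro X Y _ _; trivial
  | conj φ ψ ihφ ihψ => intro X Y h hsub; exact ⟨ihφ X Y h.1 hsub, ihψ X Y h.2 hsub⟩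
  | disj φ ψ ihφ ihψ =>
      rintro X Y ⟨A, B, rfl, hA, hB⟩ hsub
      refine ⟨A ∩ Y, B ∩ Y, ?_, ihφ A _ hA Set.inter_subset_left,
        ihψ B _ hB Set.inter_subset_left⟩
      rw [← Set.union_inter_distrib_right]
      exact (Set.inter_eq_right.mpr hsub).symm

lemma tsat_union {V : Type} (φ : PL V) : ∀ X Y : Set (V → Bool),
    PL.tsat φ X → PL.tsat φ Y → PL.tsat φ (X ∪ Y) := by
  induction φ with
  | pos p => intro X Y hX hY v hv; rcases hv with h | h; exacts [hX v h, hY v h]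
  | neg p => intro X Y hX hY v hv; rcases hv with h | h; exacts [hX v h, hY v h]
  | bot => intro X Y hX hY; subst hX; subst hY; simpa using tsat_empty (V := V) .bot
  | top => intro X Y _ _; trivial
  | conj φ ψ ihφ ihψ => intro X Y hX hY; exact ⟨ihφ X Y hX.1 hY.1, ihψ X Y hX.2 hY.2⟩
  | disj φ ψ ihφ ihψ =>
      rintro X Y ⟨A, B, rfl, hA, hB⟩ ⟨C, D, rfl, hC, hD⟩
      exact ⟨A ∪ C, B ∪ D, by ac_rfl, ihφ A C hA hC, ihψ B D hB hD⟩

lemma vp_ne_vn : vp ≠ vn := fun h => by simpa [vp, vn] using congrFun h ()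

lemma lab_sb_eq : lab St.sb = lab St.sp ∪ lab St.sn :=
  Set.insert_eq vp {vn}

lemma minSt_sb (φ : PL Unit) : minSt φ .sb ↔ PL.tsat φ (lab .sb) := by
  constructor
  · exact fun h => h.1
  · intro h
    refine ⟨h, fun s' _ hlt => ?_⟩
    rcases hlt.2 with h2 | h2 <;> exact St.noConfusion h2

lemma minSt_sp (φ : PL Unit) :
    minSt φ .sp ↔ PL.tsat φ (lab .sp) ∧ ¬ PL.tsat φ (lab .sb) := by
  constructor
  · intro h
    exact ⟨h.1, fun hb => h.2 .sb hb ⟨rfl, Or.inl rfl⟩⟩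
  · rintro ⟨h1, h2⟩
    refine ⟨h1, fun s' hs' hlt => ?_⟩
    rcases hlt with ⟨rfl, _⟩
    exact h2 hs'

lemma minSt_sn (φ : PL Unit) :
    minSt φ .sn ↔ PL.tsat φ (lab .sn) ∧ ¬ PL.tsat φ (lab .sb) := by
  constructor
  · intro h
    exact ⟨h.1, fun hb => h.2 .sb hb ⟨rfl, Or.inr rfl⟩⟩
  · rintro ⟨h1, h2⟩
    refine ⟨h1, fun s' hs' hlt => ?_⟩
    rcases hlt with ⟨rfl, _⟩
    exact h2 hs'

-- key: Or rule
lemma or_rule (φ ψ γ : PL Unit) (hφ : entSt φ γ) (hψ : entSt ψ γ) :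
    entSt (.disj φ ψ) γ := by
  -- helper: if a singleton team satisfies φ or ψ and sb doesn't satisfy disj,
  -- first a helper for singleton satisfaction of disj
  have single : ∀ (v : Unit → Bool) (X : Set (Unit → Bool)), v ∈ X →
      PL.tsat (PL.disj φ ψ) X → PL.tsat φ {v} ∨ PL.tsat ψ {v} := by
    rintro v X hv ⟨Y, Z, hYZ, hY, hZ⟩
    rw [hYZ] at hv
    rcases hv with h | h
    · exact Or.inl (tsat_mono φ Y {v} hY (Set.singleton_subset_iff.mpr h))
    · exact Or.inr (tsat_mono ψ Z {v} hZ (Set.singleton_subset_iff.mpr h))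
  intro s hs
  -- note: sb ⊨ φ → sb ⊨ disj φ ψ, and sb ⊨ ψ → sb ⊨ disj φ ψ
  have sbφ : PL.tsat φ (lab .sb) → PL.tsat (PL.disj φ ψ) (lab .sb) :=
    fun h => ⟨lab .sb, ∅, by simp, h, tsat_empty ψ⟩
  have sbψ : PL.tsat ψ (lab .sb) → PL.tsat (PL.disj φ ψ) (lab .sb) :=
    fun h => ⟨∅, lab .sb, by simp, tsat_empty φ, h⟩
  cases s with
  | sp =>
      rcases (minSt_sp _).mp hs with ⟨h1, h2⟩
      have hvp : vp ∈ lab St.sp := rfl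
      rcases single vp (lab .sp) hvp h1 with h | h
      · exact hφ .sp ((minSt_sp φ).mpr ⟨h, fun hb => h2 (sbφ hb)⟩)
      · exact hψ .sp ((minSt_sp ψ).mpr ⟨h, fun hb => h2 (sbψ hb)⟩)
  | sn =>
      rcases (minSt_sn _).mp hs with ⟨h1, h2⟩
      have hvn : vn ∈ lab St.sn := rfl
      rcases single vn (lab .sn) hvn h1 with h | h
      · exact hφ .sn ((minSt_sn φ).mpr ⟨h, fun hb => h2 (sbφ hb)⟩)
      · exact hψ .sn ((minSt_sn ψ).mpr ⟨h, fun hb => h2 (sbψ hb)⟩)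
  | sb =>
      have hd := hs.1
      by_cases hbφ : PL.tsat φ (lab .sb)
      · exact hφ .sb ((minSt_sb φ).mpr hbφ)
      by_cases hbψ : PL.tsat ψ (lab .sb)
      · exact hψ .sb ((minSt_sb ψ).mpr hbψ)
      -- neither; get γ at each singleton, then union
      have key : ∀ v : Unit → Bool, v ∈ lab St.sb → PL.tsat γ {v} := by
        intro v hv
        rcases hv with rfl | rfl
        · rcases single vp (lab .sb) (Or.inl rfl) hd with h | h
          · exact hφ .sp ((minSt_sp φ).mpr ⟨h, hbφ⟩)
          · exact hψ .sp ((minSt_sp ψ).mpr ⟨h, hbψ⟩)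
        · rcases single vn (lab .sb) (Or.inr rfl) hd with h | h
          · exact hφ .sn ((minSt_sn φ).mpr ⟨h, hbφ⟩)
          · exact hψ .sn ((minSt_sn ψ).mpr ⟨h, hbψ⟩)
      have := tsat_union γ (lab .sp) (lab .sn) (key vp (Or.inl rfl)) (key vn (Or.inr rfl))
      rwa [← lab_sb_eq] at this

/-- The model `W_⊛` violates (△) and violates (⋆) (witnessed by
`min(⟦p ∨ ¬p⟧,≺) = {X_pp̄} ⊈ {X_p} ∪ {X_p̄} = min(⟦p⟧,≺) ∪ min(⟦¬p⟧,≺)`),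
yet its entailment relation satisfies System P on PL-formulas. -/
theorem TPL_star_triangle_fail_but_SystemP :
    -- W_⊛ violates property (△)
    (¬ ∀ s : St, 1 < (lab s).ncard → ∃ s', lab s' ⊂ lab s ∧ stlt s' s) ∧
    -- W_⊛ violates property (⋆), witnessed by φ = p, ψ = ¬p
    (minTeams (.disj (.pos ()) (.neg ())) = {lab .sb} ∧
      minTeams (.pos ()) = {lab .sp} ∧
      minTeams (.neg ()) = {lab .sn} ∧
      ¬ minTeams (.disj (.pos ()) (.neg ())) ⊆
          minTeams (.pos ()) ∪ minTeams (.neg ())) ∧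
    -- yet ⊢_{W_⊛} satisfies System P on PL-formulas
    ((∀ φ : PL Unit, entSt φ φ) ∧
      (∀ φ ψ γ : PL Unit,
        {X : Set (Unit → Bool) | PL.tsat φ X} = {X : Set (Unit → Bool) | PL.tsat ψ X} →
        entSt φ γ → entSt ψ γ) ∧
      (∀ φ ψ γ : PL Unit,
        {X : Set (Unit → Bool) | PL.tsat φ X} ⊆ {X : Set (Unit → Bool) | PL.tsat ψ X} →
        entSt γ φ → entSt γ ψ) ∧
      (∀ φ ψ γ : PL Unit, entSt (.conj φ ψ) γ → entSt φ ψ → entSt φ γ) ∧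
      (∀ φ ψ γ : PL Unit, entSt φ ψ → entSt φ γ → entSt (.conj φ ψ) γ) ∧
      (∀ φ ψ γ : PL Unit, entSt φ γ → entSt ψ γ → entSt (.disj φ ψ) γ)) := by
  -- basic satisfaction facts
  have possp : PL.tsat (PL.pos ()) (lab .sp) := by
    rintro v (rfl : v = vp); rfl
  have negsn : PL.tsat (PL.neg ()) (lab .sn) := by
    rintro v (rfl : v = vn); rfl
  have npossb : ¬ PL.tsat (PL.pos ()) (lab .sb) := fun h => by
    simpa [vn] using h vn (Or.inr rfl)
  have nnegsb : ¬ PL.tsat (PL.neg ()) (lab .sb) := fun h => by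
    simpa [vp] using h vp (Or.inl rfl)
  have npossn : ¬ PL.tsat (PL.pos ()) (lab .sn) := fun h => by
    simpa [vn] using h vn rfl
  have nnegsp : ¬ PL.tsat (PL.neg ()) (lab .sp) := fun h => by
    simpa [vp] using h vp rfl
  have dsb : PL.tsat (PL.disj (.pos ()) (.neg ())) (lab .sb) :=
    ⟨lab .sp, lab .sn, lab_sb_eq, possp, negsn⟩
  have labne : lab St.sb ≠ lab St.sp := by
    intro h
    have : vn ∈ lab St.sp := h ▸ (Or.inr rfl)
    exact vp_ne_vn this.symm
  have labne' : lab St.sb ≠ lab St.sn := by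
    intro h
    have : vp ∈ lab St.sn := h ▸ (Or.inl rfl)
    exact vp_ne_vn this
  refine ⟨?_, ⟨?_, ?_, ?_, ?_⟩, ?_, ?_, ?_, ?_, ?_, ?_⟩
  · -- ¬ (△)
    intro h
    have h2 : 1 < (lab St.sb).ncard := by
      rw [show lab St.sb = {vp, vn} from rfl, Set.ncard_pair vp_ne_vn]; norm_num
    obtain ⟨s', _, hlt⟩ := h .sb h2
    rcases hlt.2 with h | h <;> exact St.noConfusion h
  · -- minTeams of the disjunction
    ext X
    constructor
    · rintro ⟨s, hm, rfl⟩
      cases s with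
      | sp => exact absurd ((minSt_sp _).mp hm).2 (not_not_intro dsb)
      | sn => exact absurd ((minSt_sn _).mp hm).2 (not_not_intro dsb)
      | sb => rfl
    · rintro (rfl : X = lab St.sb)
      exact ⟨.sb, (minSt_sb _).mpr dsb, rfl⟩
  · -- minTeams (pos)
    ext X
    constructor
    · rintro ⟨s, hm, rfl⟩
      cases s with
      | sp => rfl
      | sn => exact absurd hm.1 npossn
      | sb => exact absurd hm.1 npossb
    · rintro (rfl : X = lab St.sp)
      exact ⟨.sp, (minSt_sp _).mpr ⟨possp, npossb⟩, rfl⟩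
  · -- minTeams (neg)
    ext X
    constructor
    · rintro ⟨s, hm, rfl⟩
      cases s with
      | sp => exact absurd hm.1 nnegsp
      | sn => rfl
      | sb => exact absurd hm.1 nnegsb
    · rintro (rfl : X = lab St.sn)
      exact ⟨.sn, (minSt_sn _).mpr ⟨negsn, nnegsb⟩, rfl⟩
  · -- ¬ ⊆
    intro hsub
    have hmem : lab St.sb ∈ minTeams (.disj (.pos ()) (.neg ())) :=
      ⟨.sb, (minSt_sb _).mpr dsb, rfl⟩
    rcases hsub hmem with ⟨s, hm, heq⟩ | ⟨s, hm, heq⟩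
    · cases s with
      | sp => exact labne heq.symm
      | sn => exact absurd hm.1 npossn
      | sb => exact absurd hm.1 npossb
    · cases s with
      | sp => exact absurd hm.1 nnegsp
      | sn => exact labne' heq.symm
      | sb => exact absurd hm.1 nnegsb
  · -- Ref
    exact fun φ s hs => hs.1
  · -- LLE
    intro φ ψ γ h hφγ s hs
    have hiff : ∀ X, PL.tsat φ X ↔ PL.tsat ψ X := fun X => Set.ext_iff.mp h X
    refine hφγ s ⟨(hiff _).mpr hs.1, fun s' hs' => hs.2 s' ((hiff _).mp hs')⟩
  · -- RW
    exact fun φ ψ γ h hγφ s hs => h (hγφ s hs)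
  · -- Cut
    intro φ ψ γ hconj hφψ s hs
    exact hconj s ⟨⟨hs.1, hφψ s hs⟩, fun s' hs' => hs.2 s' hs'.1⟩
  · -- CM
    intro φ ψ γ hφψ hφγ s hs
    refine hφγ s ⟨hs.1.1, fun s' hs' hlt => ?_⟩
    rcases hlt with ⟨rfl, h2⟩
    have hbmin : minSt φ .sb := (minSt_sb φ).mpr hs'
    exact hs.2 .sb ⟨hs', hφψ .sb hbmin⟩ ⟨rfl, h2⟩
  · -- Or
    exact or_rule
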